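/- Let Hypothesis (C) hold, let (u_i, w_i) ∈ W^{1,1}(0,T; X) × W^{1,1}(0,T; W) and x_i⁰ ∈ Z(w_i(0)) for i = 1, 2, and let ξ_i ∈ W^{1,1}(0,T; X) be the solutions of the sweeping process (GP) with x_i = u_i − ξ_i. For i = 1,2 define A_i(t) = ⟨ξ_i'(t), ∇ₓG(x_i(t), w_i(t))⟩ and B_i(t) = ⟨u_i'(t), ∇ₓG(x_i(t), w_i(t))⟩ + ⟨w_i'(t), ∇_wG(x_i(t), w_i(t))⟩_{W,W'}. Then for a.e. t ∈ (0,T): |A₁(t) − A₂(t)| + (d/dt)|G(x₁(t), w₁(t)) − G(x₂(t), w₂(t))| ≤ |B₁(t) − B₂(t)|, and |ξ₁'(t) − ξ₂'(t)| ≤ (1/c)|A₁(t) − A₂(t)| + (1/c)(|u₁'(t)| + (K₁/c)|w₁'(t)|_W)·|∇ₓG(x₁(t), w₁(t)) − ∇ₓG(x₂(t), w₂(t))|. -/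

import Mathlib

/-!
At almost every time the sweeping condition forces `ξᵢ' = αᵢ nᵢ` with `nᵢ = ∇ₓG(xᵢ, wᵢ)`,
`αᵢ ≥ 0`, and `αᵢ = 0` unless the constraint `gᵢ = G(xᵢ, wᵢ)` is active, i.e. `gᵢ = 1`; at an
active time `gᵢ` has a local maximum, so its derivative `Bᵢ - Aᵢ` vanishes. Where `g₁ ≠ g₂`, the
smaller one is inactive, its `A` vanishes and `|g₁ - g₂|` is differentiable with derivative
`±((B₁ - A₁) - (B₂ - A₂))`, which gives the first inequality; on the level set `{g₁ = g₂}` the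
derivative of `g₁ - g₂` vanishes at all but countably many points, namely at every accumulation
point of the level set. The second inequality is the Hilbert-space estimate
`‖n₂‖ ‖α₁ n₁ - α₂ n₂‖ ≤ |α₁ ‖n₁‖² - α₂ ‖n₂‖²| + α₁ ‖n₁‖ ‖n₁ - n₂‖`, combined with
`α₁ ‖n₁‖ ≤ ‖u₁'‖ + K₁ / c ‖w₁'‖`, which follows from `B₁ = A₁` and `‖n₁‖ ≥ c`.
The chain rule for `G` along `(xᵢ, wᵢ)` is available because partial Gâteaux derivatives that
are continuous are Fréchet derivatives.
-/

open MeasureTheory Set Filter Metric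
open scoped RealInnerProductSpace Topology

/-- `f ∈ W^{1,1}(0,T;Y)` with a.e. derivative `f'`: `f'` is Bochner integrable on `(0,T)`
and `f t = f 0 + ∫₀ᵗ f'` on `[0,T]`. -/
def IsW11 {Y : Type*} [NormedAddCommGroup Y] [NormedSpace ℝ Y] (T : ℝ) (f f' : ℝ → Y) : Prop :=
  IntegrableOn f' (Ioo 0 T) ∧ ∀ t ∈ Icc 0 T, f t = f 0 + ∫ s in (0:ℝ)..t, f' s

/-- Solution of the sweeping process (GP) with data `(u, w, x₀)`, where `ξ'` is the a.e.
derivative of `ξ` and `x(t) = u(t) - ξ(t)`. -/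
def IsGPSol {X W : Type*} [NormedAddCommGroup X] [InnerProductSpace ℝ X]
    (T r : ℝ) (Zs : W → Set X) (u : ℝ → X) (w : ℝ → W) (x₀ : X) (ξ ξ' : ℝ → X) : Prop :=
  (∀ t ∈ Icc 0 T, u t - ξ t ∈ Zs (w t)) ∧ u 0 - ξ 0 = x₀ ∧
    ∀ᵐ t ∂(volume.restrict (Ioo 0 T)), ∀ z ∈ Zs (w t),
      ⟪(u t - ξ t) - z, ξ' t⟫ + ‖ξ' t‖ / (2 * r) * ‖(u t - ξ t) - z‖ ^ 2 ≥ 0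

theorem IsW11.ae_hasDerivAt {Y : Type*} [NormedAddCommGroup Y] [NormedSpace ℝ Y]
    [CompleteSpace Y] {T : ℝ} {f f' : ℝ → Y} (hf : IsW11 T f f') :
    ∀ᵐ t ∂volume.restrict (Ioo 0 T), HasDerivAt f (f' t) t := by
  rcases le_or_gt T 0 with hT | hT
  · simp [Ioo_eq_empty_of_le hT]
  have hint : IntervalIntegrable f' volume 0 T :=
    (intervalIntegrable_iff_integrableOn_Ioo_of_le hT.le).2 hf.1
  filter_upwards [ae_restrict_of_ae hint.ae_hasDerivAt_integral, ae_restrict_mem measurableSet_Ioo]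
    with t hprim ht
  have hT' : uIcc 0 T = Icc 0 T := uIcc_of_le hT.le
  have hF := (hprim (hT' ▸ Ioo_subset_Icc_self ht) 0 left_mem_uIcc).const_add (f 0)
  refine hF.congr_of_eventuallyEq ?_
  filter_upwards [Ioo_mem_nhds ht.1 ht.2] with τ hτ
  exact hf.2 τ (Ioo_subset_Icc_self hτ)

theorem ae_eq_zero_of_hasDerivAt_of_apply_eq_zero (f : ℝ → ℝ) :
    ∀ᵐ t, f t = 0 → ∀ d, HasDerivAt f d t → d = 0 := by
  set S := {t | f t = 0}
  filter_upwards [(countable_setOfPred_isolated_right_within (s := S)).ae_notMem volume]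
    with t hisol ht d hd
  have : (𝓝[S ∩ Ioi t] t).NeBot := ⟨fun h => hisol ⟨ht, h⟩⟩
  refine tendsto_nhds_unique ((hasDerivAt_iff_tendsto_slope.1 hd).mono_left
    (nhdsWithin_mono _ fun s (hs : s ∈ S ∩ Ioi t) => ne_of_gt hs.2)) (tendsto_const_nhds.congr' ?_)
  filter_upwards [self_mem_nhdsWithin] with s hs
  simp [slope_def_field, show f s = 0 from hs.1, ht]

theorem HasDerivAt.abs_of_apply_eq_zero_imp {f : ℝ → ℝ} {d t : ℝ} (hf : HasDerivAt f d t)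
    (h0 : f t = 0 → d = 0) : HasDerivAt (fun s => |f s|) (SignType.sign (f t) * d) t := by
  by_cases hft : f t = 0
  · obtain rfl := h0 hft
    rw [hasDerivAt_iff_isLittleO] at hf ⊢
    simpa [hft] using hf.norm_left
  · exact (hasDerivAt_abs hft).comp t hf

theorem continuous_uncurry_of_norm_sub_le {E₁ E₂ F : Type*} [SeminormedAddCommGroup E₁]
    [SeminormedAddCommGroup E₂] [SeminormedAddCommGroup F] {f : E₁ → E₂ → F} {C : ℝ}
    (hf : ∀ x x' y y', ‖f x y - f x' y'‖ ≤ C * (‖x - x'‖ + ‖y - y'‖)) : Continuous ↿f := by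
  refine continuous_iff_continuousAt.2 fun p => tendsto_iff_norm_sub_tendsto_zero.2 <|
    squeeze_zero_norm (fun q => (norm_norm _).le.trans (hf q.1 p.1 q.2 p.2)) ?_
  have : Continuous fun q : E₁ × E₂ => C * (‖q.1 - p.1‖ + ‖q.2 - p.2‖) := by fun_prop
  simpa using this.tendsto p

section LineDeriv

variable {E F : Type*} [NormedAddCommGroup E] [NormedSpace ℝ E] [NormedAddCommGroup F]
  [NormedSpace ℝ F]

theorem hasFDerivAt_of_hasLineDerivAt_of_continuousAt {f : E → F} {f' : E → E →L[ℝ] F} {x : E}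
    (hf : ∀ y v, HasLineDerivAt ℝ f (f' y v) y v) (hf' : ContinuousAt f' x) :
    HasFDerivAt f (f' x) x := by
  rw [hasFDerivAt_iff_isLittleO_nhds_zero, Asymptotics.isLittleO_iff]
  intro ε hε
  obtain ⟨δ, hδ, hclose⟩ := continuousAt_iff.1 hf' ε hε
  filter_upwards [ball_mem_nhds 0 hδ] with h hh
  have hderiv (s : ℝ) : HasDerivAt (fun s : ℝ => f (x + s • h) - s • f' x h)
      (f' (x + s • h) h - f' x h) s := by
    have hline : HasDerivAt (fun r => f (x + s • h + (r - s) • h)) (f' (x + s • h) h) s :=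
      HasDerivAt.comp_sub_const s s (by rw [sub_self]; exact hf (x + s • h) h)
    have hshift : (fun r : ℝ => f (x + s • h + (r - s) • h)) = fun r => f (x + r • h) := by
      ext r; congr 1; module
    rw [hshift] at hline
    have := hline.sub ((hasDerivAt_id' s).smul_const (f' x h))
    rwa [one_smul] at this
  have hbound : ∀ s ∈ Ico (0 : ℝ) 1, ‖f' (x + s • h) h - f' x h‖ ≤ ε * ‖h‖ := by
    intro s hs
    have hsh : dist (x + s • h) x < δ := by
      rw [dist_eq_norm, add_sub_cancel_left, norm_smul, Real.norm_eq_abs, abs_of_nonneg hs.1]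
      rw [mem_ball, dist_zero_right] at hh
      nlinarith [norm_nonneg h, hs.2]
    rw [← sub_apply]
    exact (ContinuousLinearMap.le_opNorm _ _).trans
      (mul_le_mul_of_nonneg_right (by simpa [dist_eq_norm] using (hclose hsh).le) (norm_nonneg _))
  have := norm_image_sub_le_of_norm_deriv_le_segment_01'
    (fun s _ => (hderiv s).hasDerivWithinAt) hbound
  simpa [sub_right_comm] using this

theorem hasFDerivAt_uncurry_of_hasLineDerivAt {E₁ E₂ : Type*} [NormedAddCommGroup E₁]
    [NormedSpace ℝ E₁] [NormedAddCommGroup E₂] [NormedSpace ℝ E₂] {f : E₁ → E₂ → F}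
    {f₁ : E₁ → E₂ → E₁ →L[ℝ] F} {f₂ : E₁ → E₂ → E₂ →L[ℝ] F}
    (hf₁ : ∀ x y v, HasLineDerivAt ℝ (f · y) (f₁ x y v) x v)
    (hf₂ : ∀ x y v, HasLineDerivAt ℝ (f x ·) (f₂ x y v) y v)
    (hc₁ : Continuous ↿f₁) (hc₂ : Continuous ↿f₂) (p : E₁ × E₂) :
    HasFDerivAt ↿f ((↿f₁ p).coprod (↿f₂ p)) p :=
  (hasStrictFDerivAt_uncurry_coprod
    (.of_forall fun q => hasFDerivAt_of_hasLineDerivAt_of_continuousAt (hf₁ · q.2)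
      (hc₁.comp (Continuous.prodMk_left q.2)).continuousAt)
    (.of_forall fun q => hasFDerivAt_of_hasLineDerivAt_of_continuousAt (hf₂ q.1)
      (hc₂.comp (Continuous.prodMk_right q.1)).continuousAt)
    hc₁.continuousAt hc₂.continuousAt).hasFDerivAt

end LineDeriv

theorem HasLineDerivAt.eventually_lt_of_neg {E : Type*} [AddCommGroup E] [Module ℝ E]
    {g : E → ℝ} {x v : E} {d : ℝ} (hg : HasLineDerivAt ℝ g d x v) (hd : d < 0) :
    ∀ᶠ s in 𝓝[>] (0 : ℝ), g (x + s • v) < g x := by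
  filter_upwards [hg.tendsto_slope_zero_right.eventually (eventually_lt_nhds hd),
    self_mem_nhdsWithin] with s hs (hs0 : 0 < s)
  rw [smul_eq_mul] at hs
  linarith [neg_of_mul_neg_right hs (inv_nonneg.2 hs0.le)]

section Normal

variable {X : Type*} [NormedAddCommGroup X] [InnerProductSpace ℝ X]

theorem inner_le_zero_of_eventually_mem {Z : Set X} {x ξ v : X} {κ : ℝ}
    (hVI : ∀ z ∈ Z, ⟪x - z, ξ⟫ + κ * ‖x - z‖ ^ 2 ≥ 0)
    (hv : ∀ᶠ s in 𝓝[>] (0 : ℝ), x + s • v ∈ Z) : ⟪v, ξ⟫ ≤ 0 := by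
  have hlim : Tendsto (fun s : ℝ => κ * s * ‖v‖ ^ 2) (𝓝[>] 0) (𝓝 0) := by
    have : Continuous fun s : ℝ => κ * s * ‖v‖ ^ 2 := by fun_prop
    simpa using (this.tendsto 0).mono_left nhdsWithin_le_nhds
  refine ge_of_tendsto hlim ?_
  filter_upwards [hv, self_mem_nhdsWithin] with s hs (hs0 : 0 < s)
  have h := hVI _ hs
  rw [show x - (x + s • v) = -(s • v) by abel, inner_neg_left, real_inner_smul_left, norm_neg,
    norm_smul, Real.norm_eq_abs, abs_of_pos hs0] at h
  exact le_of_mul_le_mul_left (by nlinarith) hs0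

theorem exists_nonneg_smul_eq_of_inner_le_zero {n ξ : X} (hn : n ≠ 0)
    (h : ∀ v, ⟪n, v⟫ < 0 → ⟪v, ξ⟫ ≤ 0) : ∃ α ≥ (0 : ℝ), ξ = α • n := by
  have hn2 : 0 < ‖n‖ ^ 2 := by positivity
  have h' : ∀ v, ⟪n, v⟫ ≤ 0 → ⟪v, ξ⟫ ≤ 0 := by
    intro v hv
    have hlim : Tendsto (fun ε : ℝ => ⟪v - ε • n, ξ⟫) (𝓝[>] 0) (𝓝 ⟪v, ξ⟫) := by
      have : Continuous fun ε : ℝ => ⟪v - ε • n, ξ⟫ := by fun_prop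
      simpa using (this.tendsto 0).mono_left nhdsWithin_le_nhds
    refine le_of_tendsto hlim ?_
    filter_upwards [self_mem_nhdsWithin] with ε (hε : 0 < ε)
    refine h _ ?_
    rw [inner_sub_right, real_inner_smul_right, real_inner_self_eq_norm_sq]
    nlinarith
  set α := ⟪n, ξ⟫ / ‖n‖ ^ 2
  have hp : ⟪n, ξ - α • n⟫ = 0 := by
    rw [inner_sub_right, real_inner_smul_right, real_inner_self_eq_norm_sq,
      div_mul_cancel₀ _ hn2.ne', sub_self]
  have hpξ : ⟪ξ - α • n, ξ⟫ = 0 := by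
    refine le_antisymm (h' _ hp.le) ?_
    have := h' (-(ξ - α • n)) (by rw [inner_neg_right, hp, neg_zero])
    rwa [inner_neg_left, neg_nonpos] at this
  have hp0 : ξ - α • n = 0 := by
    rw [← real_inner_self_nonpos, inner_sub_right, hpξ, real_inner_smul_right, real_inner_comm, hp]
    simp
  have hnξ : 0 ≤ ⟪n, ξ⟫ := by
    have := h' (-n) (by rw [inner_neg_right, real_inner_self_eq_norm_sq]; linarith)
    rwa [inner_neg_left, neg_nonpos] at this
  exact ⟨α, div_nonneg hnξ hn2.le, sub_eq_zero.1 hp0⟩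

theorem exists_nonneg_smul_eq_of_variational_ineq {g : X → ℝ} {x n ξ : X} {κ : ℝ}
    (hg : ∀ v, HasLineDerivAt ℝ g ⟪n, v⟫ x v) (hx : g x ≤ 1) (hn : g x = 1 → n ≠ 0)
    (hVI : ∀ z, g z ≤ 1 → ⟪x - z, ξ⟫ + κ * ‖x - z‖ ^ 2 ≥ 0) :
    ∃ α ≥ (0 : ℝ), ξ = α • n ∧ (α ≠ 0 → g x = 1) := by
  rcases hx.lt_or_eq with hlt | heq
  · have hmem : ∀ᶠ s in 𝓝[>] (0 : ℝ), g (x + s • ξ) ≤ 1 := by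
      have hcont : ContinuousAt (fun s : ℝ => g (x + s • ξ)) 0 := HasDerivAt.continuousAt (hg ξ)
      refine (hcont.eventually_lt continuousAt_const (by simpa using hlt)).filter_mono
        nhdsWithin_le_nhds |>.mono fun s hs => hs.le
    have hξ := inner_le_zero_of_eventually_mem (Z := {z | g z ≤ 1}) hVI hmem
    exact ⟨0, le_rfl, by rw [zero_smul]; exact real_inner_self_nonpos.1 hξ, fun h => (h rfl).elim⟩
  · obtain ⟨α, hα, rfl⟩ := exists_nonneg_smul_eq_of_inner_le_zero (hn heq) fun v hv =>
      inner_le_zero_of_eventually_mem (Z := {z | g z ≤ 1}) hVI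
        (((hg v).eventually_lt_of_neg hv).mono fun s hs => (heq ▸ hs).le)
    exact ⟨α, hα, rfl, fun _ => heq⟩

end Normal

section Comparison

variable {X : Type*} [NormedAddCommGroup X] [InnerProductSpace ℝ X]

theorem norm_mul_norm_smul_sub_smul_le (n₁ n₂ : X) {α₁ : ℝ} (α₂ : ℝ) (hα₁ : 0 ≤ α₁) :
    ‖n₂‖ * ‖α₁ • n₁ - α₂ • n₂‖ ≤
      |α₁ * ‖n₁‖ ^ 2 - α₂ * ‖n₂‖ ^ 2| + α₁ * ‖n₁‖ * ‖n₁ - n₂‖ := by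
  set E := α₁ * ‖n₁‖ ^ 2 - α₂ * ‖n₂‖ ^ 2
  set q := ⟪n₁, n₁ - n₂⟫
  have hid : (‖n₂‖ * ‖α₁ • n₁ - α₂ • n₂‖) ^ 2 =
      E ^ 2 + (α₁ * ‖n₁‖ * ‖n₁ - n₂‖) ^ 2 - 2 * α₁ * q * E := by
    simp only [E, q, mul_pow, norm_sub_sq_real, inner_sub_right, real_inner_smul_left,
      real_inner_smul_right, norm_smul, real_inner_self_eq_norm_sq, Real.norm_eq_abs, sq_abs]
    ring
  have hq : -(q * E) ≤ ‖n₁‖ * ‖n₁ - n₂‖ * |E| := by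
    calc -(q * E) ≤ |q * E| := neg_le_abs _
      _ = |q| * |E| := abs_mul _ _
      _ ≤ ‖n₁‖ * ‖n₁ - n₂‖ * |E| := by gcongr; exact abs_real_inner_le_norm _ _
  refine (pow_le_pow_iff_left₀ (by positivity) (by positivity) two_ne_zero).1 ?_
  rw [hid, add_sq, sq_abs]
  nlinarith [mul_le_mul_of_nonneg_left hq hα₁]

theorem mul_norm_smul_sub_smul_le {n₁ n₂ : X} {α₁ α₂ c : ℝ} (hα₁ : 0 ≤ α₁)
    (hn₁ : α₁ ≠ 0 → c ≤ ‖n₁‖) (hn₂ : α₂ ≠ 0 → c ≤ ‖n₂‖) :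
    c * ‖α₁ • n₁ - α₂ • n₂‖ ≤ |α₁ * ‖n₁‖ ^ 2 - α₂ * ‖n₂‖ ^ 2| + α₁ * ‖n₁‖ * ‖n₁ - n₂‖ := by
  rcases eq_or_ne α₂ 0 with rfl | hα₂
  · have hc : c * (α₁ * ‖n₁‖) ≤ α₁ * ‖n₁‖ ^ 2 := by
      rcases eq_or_ne α₁ 0 with rfl | hα₁'
      · simp
      have := mul_le_mul_of_nonneg_left (hn₁ hα₁') (mul_nonneg hα₁ (norm_nonneg n₁))
      linarith
    simp only [zero_smul, sub_zero, zero_mul, norm_smul, Real.norm_eq_abs, abs_of_nonneg hα₁,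
      abs_of_nonneg (by positivity : 0 ≤ α₁ * ‖n₁‖ ^ 2)]
    have : 0 ≤ α₁ * ‖n₁‖ * ‖n₁ - n₂‖ := by positivity
    linarith
  · exact (mul_le_mul_of_nonneg_right (hn₂ hα₂) (norm_nonneg _)).trans
      (norm_mul_norm_smul_sub_smul_le n₁ n₂ α₂ hα₁)

theorem norm_sub_le_of_eq_smul {ξ₁ ξ₂ n₁ n₂ : X} {α₁ α₂ c M : ℝ} (hc : 0 < c) (hα₁ : 0 ≤ α₁)
    (hξ₁ : ξ₁ = α₁ • n₁) (hξ₂ : ξ₂ = α₂ • n₂)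
    (hn₁ : α₁ ≠ 0 → c ≤ ‖n₁‖) (hn₂ : α₂ ≠ 0 → c ≤ ‖n₂‖) (hM : α₁ * ‖n₁‖ ≤ M) :
    ‖ξ₁ - ξ₂‖ ≤ 1 / c * |⟪ξ₁, n₁⟫ - ⟪ξ₂, n₂⟫| + 1 / c * M * ‖n₁ - n₂‖ := by
  subst hξ₁ hξ₂
  simp only [real_inner_smul_left, real_inner_self_eq_norm_sq]
  rw [mul_assoc, ← mul_add, one_div, inv_mul_eq_div, le_div_iff₀' hc]
  exact (mul_norm_smul_sub_smul_le hα₁ hn₁ hn₂).trans (by gcongr)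

theorem abs_inner_sub_add_sign_mul_le {ξ₁ ξ₂ n₁ n₂ : X} {α₁ α₂ g₁ g₂ b₁ b₂ : ℝ}
    (hg₁ : g₁ ≤ 1) (hg₂ : g₂ ≤ 1) (hα₁ : 0 ≤ α₁) (hα₂ : 0 ≤ α₂)
    (hξ₁ : ξ₁ = α₁ • n₁) (hξ₂ : ξ₂ = α₂ • n₂) (h₁ : α₁ ≠ 0 → g₁ = 1) (h₂ : α₂ ≠ 0 → g₂ = 1)
    (heq : g₁ = g₂ → b₁ - ⟪ξ₁, n₁⟫ - (b₂ - ⟪ξ₂, n₂⟫) = 0) :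
    |⟪ξ₁, n₁⟫ - ⟪ξ₂, n₂⟫| + SignType.sign (g₁ - g₂) * (b₁ - ⟪ξ₁, n₁⟫ - (b₂ - ⟪ξ₂, n₂⟫)) ≤
      |b₁ - b₂| := by
  have hA {ξ n : X} {α g : ℝ} (hα : 0 ≤ α) (hξ : ξ = α • n) (h : α ≠ 0 → g = 1) :
      0 ≤ ⟪ξ, n⟫ ∧ (g < 1 → ⟪ξ, n⟫ = 0) := by
    subst hξ
    refine ⟨by rw [real_inner_smul_left]; exact mul_nonneg hα real_inner_self_nonneg, fun hg => ?_⟩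
    rw [not_imp_comm.1 h hg.ne, zero_smul, inner_zero_left]
  obtain ⟨hA₁, hA₁0⟩ := hA hα₁ hξ₁ h₁
  obtain ⟨hA₂, hA₂0⟩ := hA hα₂ hξ₂ h₂
  rcases lt_trichotomy g₁ g₂ with h | rfl | h
  · rw [sign_neg (sub_neg.2 h), hA₁0 (h.trans_le hg₂), zero_sub, abs_neg, abs_of_nonneg hA₂]
    simp only [SignType.coe_neg, SignType.coe_one]
    linarith [neg_abs_le (b₁ - b₂)]
  · rw [sub_self, sign_zero, SignType.coe_zero, zero_mul, add_zero]
    exact le_of_eq (congrArg abs (by linarith [heq rfl]))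
  · rw [sign_pos (sub_pos.2 h), hA₂0 (h.trans_le hg₁), sub_zero, abs_of_nonneg hA₁]
    simp only [SignType.coe_one]
    linarith [le_abs_self (b₁ - b₂)]

theorem mul_norm_le_of_inner_eq {W : Type*} [NormedAddCommGroup W] [NormedSpace ℝ W]
    {n u' : X} {ℓ : StrongDual ℝ W} {w' : W} {α c K : ℝ} (hc : 0 < c) (hn : c ≤ ‖n‖)
    (hℓ : ‖ℓ‖ ≤ K) (h : ⟪u', n⟫ + ℓ w' = ⟪α • n, n⟫) : α * ‖n‖ ≤ ‖u'‖ + K / c * ‖w'‖ := by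
  have hn0 : 0 < ‖n‖ := hc.trans_le hn
  have hK : 0 ≤ K * ‖w'‖ := mul_nonneg ((norm_nonneg ℓ).trans hℓ) (norm_nonneg w')
  rw [real_inner_smul_left, real_inner_self_eq_norm_sq] at h
  have hupper : α * ‖n‖ ^ 2 ≤ ‖u'‖ * ‖n‖ + K * ‖w'‖ := by
    rw [← h]
    gcongr
    · exact real_inner_le_norm _ _
    · exact (le_abs_self _).trans ((ℓ.le_opNorm w').trans (by gcongr))
  have hK' : K * ‖w'‖ ≤ K / c * ‖w'‖ * ‖n‖ := by
    rw [div_mul_eq_mul_div, div_mul_eq_mul_div, le_div_iff₀ hc]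
    exact mul_le_mul_of_nonneg_left hn hK
  refine le_of_mul_le_mul_right ?_ hn0
  nlinarith

end Comparison

section SweepingProcess

variable {X W : Type*} [NormedAddCommGroup X] [InnerProductSpace ℝ X] {G : X → W → ℝ}
  {Gx : X → W → X} {Zs : W → Set X} {T r c K : ℝ} {u u' ξ ξ' : ℝ → X} {w w' : ℝ → W} {x₀ : X}

theorem HasFDerivAt.hasDerivAt_comp_inner_coprod [NormedAddCommGroup W] [NormedSpace ℝ W]
    {x : ℝ → X} {w : ℝ → W} {x' : X} {w' : W} {t : ℝ} {n : X} {ℓ : StrongDual ℝ W}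
    (hG : HasFDerivAt ↿G ((innerSL ℝ n).coprod ℓ) (x t, w t))
    (hx : HasDerivAt x x' t) (hw : HasDerivAt w w' t) :
    HasDerivAt (fun τ => G (x τ) (w τ)) (⟪x', n⟫ + ℓ w') t := by
  have := hG.comp_hasDerivAt t (hx.prodMk hw)
  rw [ContinuousLinearMap.coprod_apply, innerSL_apply_apply, real_inner_comm] at this
  exact this

theorem IsGPSol.hasDerivAt_eq_zero_of_eq_one (hZ : ∀ w, Zs w = {z | G z w ≤ 1})
    (hsol : IsGPSol T r Zs u w x₀ ξ ξ') {t d : ℝ} (ht : t ∈ Ioo 0 T)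
    (hd : HasDerivAt (fun τ => G (u τ - ξ τ) (w τ)) d t) (h1 : G (u t - ξ t) (w t) = 1) :
    d = 0 := by
  refine IsLocalMax.hasDerivAt_eq_zero ?_ hd
  filter_upwards [Ioo_mem_nhds ht.1 ht.2] with τ hτ
  have hτZ := hsol.1 τ (Ioo_subset_Icc_self hτ)
  rw [hZ] at hτZ
  exact h1 ▸ hτZ

theorem IsGPSol.ae_exists_eq_smul (hZ : ∀ w, Zs w = {z | G z w ≤ 1})
    (hGx : ∀ x w v, HasLineDerivAt ℝ (G · w) ⟪Gx x w, v⟫ x v)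
    (hn : ∀ x w, G x w = 1 → Gx x w ≠ 0) (hsol : IsGPSol T r Zs u w x₀ ξ ξ') :
    ∀ᵐ t ∂volume.restrict (Ioo 0 T), ∃ α ≥ (0 : ℝ),
      ξ' t = α • Gx (u t - ξ t) (w t) ∧ (α ≠ 0 → G (u t - ξ t) (w t) = 1) := by
  filter_upwards [hsol.2.2, ae_restrict_mem measurableSet_Ioo] with t hVI ht
  have hmem := hsol.1 t (Ioo_subset_Icc_self ht)
  rw [hZ] at hmem hVI
  exact exists_nonneg_smul_eq_of_variational_ineq (hGx _ _) hmem (hn _ _) hVI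

theorem IsGPSol.ae_normal_decomposition [CompleteSpace X] [NormedAddCommGroup W]
    [NormedSpace ℝ W] [CompleteSpace W] {Gw : X → W → StrongDual ℝ W} (hc : 0 < c)
    (hZ : ∀ w, Zs w = {z | G z w ≤ 1})
    (hGx : ∀ x w v, HasLineDerivAt ℝ (G · w) ⟪Gx x w, v⟫ x v)
    (hG : ∀ x w, HasFDerivAt ↿G ((innerSL ℝ (Gx x w)).coprod (Gw x w)) (x, w))
    (hGx_norm : ∀ x w, G x w = 1 → c ≤ ‖Gx x w‖) (hGw_norm : ∀ x w, ‖Gw x w‖ ≤ K)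
    (hu : IsW11 T u u') (hw : IsW11 T w w') (hξ : IsW11 T ξ ξ')
    (hsol : IsGPSol T r Zs u w x₀ ξ ξ') :
    ∀ᵐ t ∂volume.restrict (Ioo 0 T),
      HasDerivAt (fun τ => G (u τ - ξ τ) (w τ)) (⟪u' t, Gx (u t - ξ t) (w t)⟫ +
        Gw (u t - ξ t) (w t) (w' t) - ⟪ξ' t, Gx (u t - ξ t) (w t)⟫) t ∧
      G (u t - ξ t) (w t) ≤ 1 ∧
      ∃ α ≥ (0 : ℝ), ξ' t = α • Gx (u t - ξ t) (w t) ∧ (α ≠ 0 → G (u t - ξ t) (w t) = 1) ∧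
        α * ‖Gx (u t - ξ t) (w t)‖ ≤ ‖u' t‖ + K / c * ‖w' t‖ := by
  have hn x w (h : G x w = 1) : Gx x w ≠ 0 := norm_pos_iff.1 (hc.trans_le (hGx_norm x w h))
  filter_upwards [hu.ae_hasDerivAt, hw.ae_hasDerivAt, hξ.ae_hasDerivAt,
    hsol.ae_exists_eq_smul hZ hGx hn, ae_restrict_mem measurableSet_Ioo]
    with t hut hwt hξt ⟨α, hα, hξ't, h1⟩ ht
  have hd : HasDerivAt (fun τ => G (u τ - ξ τ) (w τ)) (⟪u' t, Gx (u t - ξ t) (w t)⟫ +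
      Gw (u t - ξ t) (w t) (w' t) - ⟪ξ' t, Gx (u t - ξ t) (w t)⟫) t := by
    have := (hG _ _).hasDerivAt_comp_inner_coprod (hut.sub hξt) hwt
    rwa [inner_sub_left, sub_add_eq_add_sub] at this
  have hmem := hsol.1 t (Ioo_subset_Icc_self ht)
  rw [hZ] at hmem
  refine ⟨hd, hmem, α, hα, hξ't, h1, ?_⟩
  rcases eq_or_ne α 0 with rfl | hα0
  · rw [zero_mul]
    have hK : 0 ≤ K := (norm_nonneg _).trans (hGw_norm 0 0)
    positivity
  · have hB := hsol.hasDerivAt_eq_zero_of_eq_one hZ ht hd (h1 hα0)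
    exact mul_norm_le_of_inner_eq hc (hGx_norm _ _ (h1 hα0)) (hGw_norm _ _)
      (by rw [← hξ't]; linarith)

end SweepingProcess

theorem sweeping_comparison_general
    {X W : Type*} [NormedAddCommGroup X] [InnerProductSpace ℝ X] [CompleteSpace X]
    [NormedAddCommGroup W] [NormedSpace ℝ W] [CompleteSpace W]
    (G : X → W → ℝ)
    (Zs : W → Set X) (hZ : ∀ w, Zs w = {z : X | G z w ≤ 1})
    (Gx : X → W → X)
    (lam c : ℝ) (hc : 0 < c)
    (hyp1 : ∀ (x : X) (w : W), G x w = 1 → c ≤ ‖Gx x w‖)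
    (Gw : X → W → StrongDual ℝ W)
    (hgradxall : ∀ (x : X) (w : W), ∀ y : X,
      Tendsto (fun t : ℝ => (G (x + t • y) w - G x w) / t) (𝓝[≠] (0:ℝ)) (𝓝 ⟪Gx x w, y⟫))
    (hgradw : ∀ (x : X) (w : W) (v : W),
      Tendsto (fun t : ℝ => (G x (w + t • v) - G x w) / t) (𝓝[≠] (0:ℝ)) (𝓝 (Gw x w v)))
    (K₁ C₀ C₁ : ℝ)
    (hbdw : ∀ (x : X) (w : W), ‖Gw x w‖ ≤ K₁)
    (hlipx : ∀ (x x' : X) (w w' : W), ‖Gx x w - Gx x' w'‖ ≤ C₀ * (‖x - x'‖ + ‖w - w'‖))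
    (hlipw : ∀ (x x' : X) (w w' : W), ‖Gw x w - Gw x' w'‖ ≤ C₁ * (‖x - x'‖ + ‖w - w'‖))
    (T : ℝ)
    (u₁ u₁' u₂ u₂' : ℝ → X) (hu₁ : IsW11 T u₁ u₁') (hu₂ : IsW11 T u₂ u₂')
    (w₁ w₁' w₂ w₂' : ℝ → W) (hw₁ : IsW11 T w₁ w₁') (hw₂ : IsW11 T w₂ w₂')
    (x01 x02 : X)
    (ξ₁ ξ₁' ξ₂ ξ₂' : ℝ → X) (hξ₁ : IsW11 T ξ₁ ξ₁') (hξ₂ : IsW11 T ξ₂ ξ₂')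
    (hsol₁ : IsGPSol T (c / lam) Zs u₁ w₁ x01 ξ₁ ξ₁')
    (hsol₂ : IsGPSol T (c / lam) Zs u₂ w₂ x02 ξ₂ ξ₂') :
    ∀ᵐ t ∂(volume.restrict (Ioo 0 T)), ∃ D : ℝ,
      HasDerivAt (fun τ => |G (u₁ τ - ξ₁ τ) (w₁ τ) - G (u₂ τ - ξ₂ τ) (w₂ τ)|) D t ∧
      |⟪ξ₁' t, Gx (u₁ t - ξ₁ t) (w₁ t)⟫ - ⟪ξ₂' t, Gx (u₂ t - ξ₂ t) (w₂ t)⟫| + D ≤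
        |(⟪u₁' t, Gx (u₁ t - ξ₁ t) (w₁ t)⟫ + Gw (u₁ t - ξ₁ t) (w₁ t) (w₁' t)) -
          (⟪u₂' t, Gx (u₂ t - ξ₂ t) (w₂ t)⟫ + Gw (u₂ t - ξ₂ t) (w₂ t) (w₂' t))| ∧
      ‖ξ₁' t - ξ₂' t‖ ≤
        1 / c * |⟪ξ₁' t, Gx (u₁ t - ξ₁ t) (w₁ t)⟫ - ⟪ξ₂' t, Gx (u₂ t - ξ₂ t) (w₂ t)⟫| +
        1 / c * (‖u₁' t‖ + K₁ / c * ‖w₁' t‖) *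
          ‖Gx (u₁ t - ξ₁ t) (w₁ t) - Gx (u₂ t - ξ₂ t) (w₂ t)‖ := by
  have hGx : ∀ x w v, HasLineDerivAt ℝ (G · w) ⟪Gx x w, v⟫ x v := fun x w v =>
    hasLineDerivAt_iff_tendsto_slope_zero.2 <| by
      simpa only [smul_eq_mul, div_eq_inv_mul] using hgradxall x w v
  have hGw : ∀ x w v, HasLineDerivAt ℝ (G x ·) (Gw x w v) w v := fun x w v =>
    hasLineDerivAt_iff_tendsto_slope_zero.2 <| by
      simpa only [smul_eq_mul, div_eq_inv_mul] using hgradw x w v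
  have hG x w : HasFDerivAt ↿G ((innerSL ℝ (Gx x w)).coprod (Gw x w)) (x, w) :=
    hasFDerivAt_uncurry_of_hasLineDerivAt (f₁ := fun x w => innerSL ℝ (Gx x w)) hGx hGw
      ((innerSL ℝ).continuous.comp (continuous_uncurry_of_norm_sub_le hlipx))
      (continuous_uncurry_of_norm_sub_le hlipw) (x, w)
  filter_upwards [hsol₁.ae_normal_decomposition hc hZ hGx hG hyp1 hbdw hu₁ hw₁ hξ₁,
    hsol₂.ae_normal_decomposition hc hZ hGx hG hyp1 hbdw hu₂ hw₂ hξ₂,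
    ae_restrict_of_ae (ae_eq_zero_of_hasDerivAt_of_apply_eq_zero
      fun τ => G (u₁ τ - ξ₁ τ) (w₁ τ) - G (u₂ τ - ξ₂ τ) (w₂ τ))]
    with t ⟨hd₁, hg₁, α₁, hα₁, hξ₁t, h₁, hM₁⟩ ⟨hd₂, hg₂, α₂, hα₂, hξ₂t, h₂, _⟩ hlevel
  have hd := hd₁.sub hd₂
  exact ⟨_, hd.abs_of_apply_eq_zero_imp (hlevel · _ hd),
    abs_inner_sub_add_sign_mul_le hg₁ hg₂ hα₁ hα₂ hξ₁t hξ₂t h₁ h₂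
      fun h => hlevel (sub_eq_zero.2 h) _ hd,
    norm_sub_le_of_eq_smul hc hα₁ hξ₁t hξ₂t (fun h => hyp1 _ _ (h₁ h)) (fun h => hyp1 _ _ (h₂ h))
      hM₁⟩

/-- Lemma 3.3 of the paper: comparison of two solutions of the sweeping process, where
`Aᵢ(t) = ⟪ξᵢ′(t), ∇ₓG(xᵢ(t),wᵢ(t))⟫` and
`Bᵢ(t) = ⟪uᵢ′(t), ∇ₓG(xᵢ(t),wᵢ(t))⟫ + ⟨wᵢ′(t), ∇_wG(xᵢ(t),wᵢ(t))⟩`. -/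
theorem sweeping_comparison
    {X W : Type*} [NormedAddCommGroup X] [InnerProductSpace ℝ X] [CompleteSpace X]
    [NormedAddCommGroup W] [NormedSpace ℝ W] [CompleteSpace W]
    (G : X → W → ℝ) (hGnonneg : ∀ (x : X) (w : W), 0 ≤ G x w)
    (hGlip : LocallyLipschitz (fun p : X × W => G p.1 p.2))
    (Zs : W → Set X) (hZ : ∀ w, Zs w = {z : X | G z w ≤ 1})
    (Gx : X → W → X)
    (hgradx : ∀ w : W, ∀ z ∈ Zs w, ∀ y : X,
      Tendsto (fun t : ℝ => (G (z + t • y) w - G z w) / t) (𝓝[≠] (0:ℝ)) (𝓝 ⟪Gx z w, y⟫))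
    (lam c L : ℝ) (hlam : 0 < lam) (hc : 0 < c) (hL : 0 < L)
    (μ₁ : W → ℝ → ℝ) (μ₂ : ℝ → ℝ)
    (hμ₁zero : ∀ w, μ₁ w 0 = 0) (hμ₂zero : μ₂ 0 = 0)
    (hμ₁top : ∀ w, Tendsto (μ₁ w) atTop atTop) (hμ₂top : Tendsto μ₂ atTop atTop)
    (hyp1 : ∀ (x : X) (w : W), G x w = 1 → c ≤ ‖Gx x w‖)
    (hyp2 : ∀ w : W, ∀ x ∈ Zs w, ∀ y ∈ Zs w, ‖Gx x w - Gx y w‖ ≤ μ₁ w ‖x - y‖)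
    (hyp3 : ∀ w : W, ∀ x ∈ frontier (Zs w), ∀ z ∈ Zs w,
      ⟪Gx x w - Gx z w, x - z⟫ ≥ -lam * ‖x - z‖ ^ 2)
    (hyp4 : ∀ (x : X) (w w' : W), |G x w - G x w'| ≤ L * ‖w - w'‖)
    (hyp5 : ∀ ρ > (0:ℝ), ∀ (w : W) (x : X), ρ ≤ infDist x (Zs w) → μ₂ ρ ≤ G x w - 1)
    (Gw : X → W → StrongDual ℝ W)
    (hgradxall : ∀ (x : X) (w : W), ∀ y : X,
      Tendsto (fun t : ℝ => (G (x + t • y) w - G x w) / t) (𝓝[≠] (0:ℝ)) (𝓝 ⟪Gx x w, y⟫))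
    (hgradw : ∀ (x : X) (w : W) (v : W),
      Tendsto (fun t : ℝ => (G x (w + t • v) - G x w) / t) (𝓝[≠] (0:ℝ)) (𝓝 (Gw x w v)))
    (K₀ K₁ C₀ C₁ : ℝ) (hK₀ : 0 < K₀) (hK₁ : 0 < K₁) (hC₀ : 0 < C₀) (hC₁ : 0 < C₁)
    (hbdx : ∀ (x : X) (w : W), ‖Gx x w‖ ≤ K₀)
    (hbdw : ∀ (x : X) (w : W), ‖Gw x w‖ ≤ K₁)
    (hlipx : ∀ (x x' : X) (w w' : W), ‖Gx x w - Gx x' w'‖ ≤ C₀ * (‖x - x'‖ + ‖w - w'‖))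
    (hlipw : ∀ (x x' : X) (w w' : W), ‖Gw x w - Gw x' w'‖ ≤ C₁ * (‖x - x'‖ + ‖w - w'‖))
    (T : ℝ) (hT : 0 < T)
    (u₁ u₁' u₂ u₂' : ℝ → X) (hu₁ : IsW11 T u₁ u₁') (hu₂ : IsW11 T u₂ u₂')
    (w₁ w₁' w₂ w₂' : ℝ → W) (hw₁ : IsW11 T w₁ w₁') (hw₂ : IsW11 T w₂ w₂')
    (x01 x02 : X) (hx01 : x01 ∈ Zs (w₁ 0)) (hx02 : x02 ∈ Zs (w₂ 0))
    (ξ₁ ξ₁' ξ₂ ξ₂' : ℝ → X) (hξ₁ : IsW11 T ξ₁ ξ₁') (hξ₂ : IsW11 T ξ₂ ξ₂')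
    (hsol₁ : IsGPSol T (c / lam) Zs u₁ w₁ x01 ξ₁ ξ₁')
    (hsol₂ : IsGPSol T (c / lam) Zs u₂ w₂ x02 ξ₂ ξ₂') :
    ∀ᵐ t ∂(volume.restrict (Ioo 0 T)), ∃ D : ℝ,
      HasDerivAt (fun τ => |G (u₁ τ - ξ₁ τ) (w₁ τ) - G (u₂ τ - ξ₂ τ) (w₂ τ)|) D t ∧
      |⟪ξ₁' t, Gx (u₁ t - ξ₁ t) (w₁ t)⟫ - ⟪ξ₂' t, Gx (u₂ t - ξ₂ t) (w₂ t)⟫| + D ≤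
        |(⟪u₁' t, Gx (u₁ t - ξ₁ t) (w₁ t)⟫ + Gw (u₁ t - ξ₁ t) (w₁ t) (w₁' t)) -
          (⟪u₂' t, Gx (u₂ t - ξ₂ t) (w₂ t)⟫ + Gw (u₂ t - ξ₂ t) (w₂ t) (w₂' t))| ∧
      ‖ξ₁' t - ξ₂' t‖ ≤
        1 / c * |⟪ξ₁' t, Gx (u₁ t - ξ₁ t) (w₁ t)⟫ - ⟪ξ₂' t, Gx (u₂ t - ξ₂ t) (w₂ t)⟫| +
        1 / c * (‖u₁' t‖ + K₁ / c * ‖w₁' t‖) *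
          ‖Gx (u₁ t - ξ₁ t) (w₁ t) - Gx (u₂ t - ξ₂ t) (w₂ t)‖ :=
  sweeping_comparison_general G Zs hZ Gx lam c hc hyp1 Gw hgradxall hgradw K₁ C₀ C₁ hbdw hlipx hlipw
    T u₁ u₁' u₂ u₂' hu₁ hu₂ w₁ w₁' w₂ w₂' hw₁ hw₂ x01 x02 ξ₁ ξ₁' ξ₂ ξ₂' hξ₁ hξ₂ hsol₁ hsol₂
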